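/- (Eq. (29), with sign corrected: entropic disturbance of the quantum autoencoder) In the quantum autoencoder setup with input ensemble L = {p_i, |p_i⟩⟨p_i|}_{i=1}^r, the entropic disturbance equals Δχ = S(ρ_in) − S(ρ_A) + Σ_{i=1}^r p_i S(ρ_A^{(i)}), where ρ_A = Tr_B[U ρ_in U†] and ρ_A^{(i)} = Tr_B[U |p_i⟩⟨p_i| U†]; in particular, Δχ is independent of the choice of the fresh-qubit state ρ_B. -/

import Mathlib

open scoped Kronecker BigOperators ComplexOrder

namespace QCE

variable {ι : Type*} [Fintype ι] [DecidableEq ι]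

/-- Apply a real function to a matrix via the spectral decomposition (functional calculus on
the eigenvalues); returns `0` if the matrix is not Hermitian. -/
noncomputable def matFun (A : Matrix ι ι ℂ) (f : ℝ → ℝ) : Matrix ι ι ℂ :=
  if h : A.IsHermitian then h.cfc f else 0

/-- Matrix logarithm taken on the support (eigenvalue `0` is sent to `0`,
since `Real.log 0 = 0`). -/
noncomputable def matLog (A : Matrix ι ι ℂ) : Matrix ι ι ℂ :=
  matFun A Real.log

/-- Quantum cross entropy `C(ρ₁, ρ₂) = -Tr[ρ₁ ln ρ₂]`, with the logarithm on the support. -/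
noncomputable def crossEnt (ρ₁ ρ₂ : Matrix ι ι ℂ) : ℝ :=
  -((ρ₁ * matLog ρ₂).trace.re)

/-- Von Neumann entropy `S(ρ) = -Tr[ρ ln ρ]`. -/
noncomputable def vnEntropy (ρ : Matrix ι ι ℂ) : ℝ :=
  crossEnt ρ ρ

/-- A density matrix: positive semidefinite with unit trace. -/
def IsDensityMatrix (ρ : Matrix ι ι ℂ) : Prop :=
  ρ.PosSemidef ∧ ρ.trace = 1

/-- The rank-one projector `|v⟩⟨v|`. -/
noncomputable def outer (v : ι → ℂ) : Matrix ι ι ℂ :=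
  Matrix.vecMulVec v (star v)

/-- An orthonormal family of vectors. -/
def OrthonormalFam {r : ℕ} (v : Fin r → ι → ℂ) : Prop :=
  ∀ i j, (∑ a, star (v i a) * v j a) = if i = j then (1 : ℂ) else 0

/-- The Choi matrix of a linear map on matrices. -/
noncomputable def choi {κ : Type*} [Fintype κ] [DecidableEq κ]
    (Φ : Matrix ι ι ℂ →ₗ[ℂ] Matrix κ κ ℂ) : Matrix (ι × κ) (ι × κ) ℂ :=
  ∑ i : ι, ∑ j : ι, (Matrix.single i j (1 : ℂ)) ⊗ₖ (Φ (Matrix.single i j 1))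

/-- A quantum channel: completely positive (positive semidefinite Choi matrix, by Choi's
theorem) and trace preserving. -/
def IsCPTP {κ : Type*} [Fintype κ] [DecidableEq κ]
    (Φ : Matrix ι ι ℂ →ₗ[ℂ] Matrix κ κ ℂ) : Prop :=
  (choi Φ).PosSemidef ∧ ∀ ρ : Matrix ι ι ℂ, (Φ ρ).trace = ρ.trace

/-- Partial trace over the second tensor factor. -/
noncomputable def ptraceB {dA dB : ℕ}
    (ρ : Matrix (Fin dA × Fin dB) (Fin dA × Fin dB) ℂ) : Matrix (Fin dA) (Fin dA) ℂ :=
  Matrix.of fun i j => ∑ k : Fin dB, ρ (i, k) (j, k)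

/-- Partial trace over the first tensor factor. -/
noncomputable def ptraceA {dA dB : ℕ}
    (ρ : Matrix (Fin dA × Fin dB) (Fin dA × Fin dB) ℂ) : Matrix (Fin dB) (Fin dB) ℂ :=
  Matrix.of fun i j => ∑ k : Fin dA, ρ (k, i) (k, j)


/-- Matrix square root via the spectral decomposition. -/
noncomputable def matSqrt (A : Matrix ι ι ℂ) : Matrix ι ι ℂ :=
  matFun A Real.sqrt

/-- Quantum fidelity `F[ρ,σ] = (Tr[√(√ρ σ √ρ)])²`. -/
noncomputable def fidelity (ρ σ : Matrix ι ι ℂ) : ℝ :=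
  ((matSqrt (matSqrt ρ * σ * matSqrt ρ)).trace.re) ^ 2

/-!
Both output states have the form `U† (σ ⊗ ρ_B) U`. Conjugation does not change the characteristic
polynomial, and the roots of the characteristic polynomial of `σ ⊗ ρ_B` are the products `λᵢ μⱼ`
of the eigenvalues of `σ` and `ρ_B`. Since `η(xy) = y η(x) + x η(y)` for `η(x) = -x log x` and
both spectra sum to one, `S(U† (σ ⊗ ρ_B) U) = S(σ) + S(ρ_B)`. Averaging over the ensemble with
`∑ pᵢ = 1`, the two `S(ρ_B)` terms in `Δχ` cancel.
-/

open Matrix Polynomial Real Unitary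

theorem charpoly_mul_mul_eq_of_mul_eq_one {R : Type*} [CommRing R] {A B C : Matrix ι ι R}
    (h : C * A = 1) : (A * B * C).charpoly = B.charpoly := by
  rw [Matrix.mul_assoc, charpoly_mul_comm, Matrix.mul_assoc, h, Matrix.mul_one]

theorem vnEntropy_eq_sum_negMulLog_eigenvalues {A : Matrix ι ι ℂ} (hA : A.IsHermitian) :
    vnEntropy A = ∑ i, negMulLog (hA.eigenvalues i) := by
  have hprod : A * matLog A = conjStarAlgAut ℂ _ hA.eigenvectorUnitary
      (diagonal fun i => ((hA.eigenvalues i * log (hA.eigenvalues i) : ℝ) : ℂ)) := by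
    rw [matLog, matFun, dif_pos hA, IsHermitian.cfc]
    conv_lhs => arg 1; rw [hA.spectral_theorem]
    rw [← map_mul, diagonal_mul_diagonal]
    congr 2 with i
    simp
  rw [vnEntropy, crossEnt, hprod, conjStarAlgAut_apply, trace_mul_cycle,
    Unitary.coe_star_mul_self, Matrix.one_mul, trace_diagonal, ← Complex.ofReal_sum,
    Complex.ofReal_re, ← Finset.sum_neg_distrib]
  simp [negMulLog]

theorem vnEntropy_eq_sum_negMulLog_of_charpoly_eq {A : Matrix ι ι ℂ} (hA : A.IsHermitian)
    {κ : Type*} [Fintype κ] (d : κ → ℝ) (h : A.charpoly = ∏ k, (X - C (d k : ℂ))) :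
    vnEntropy A = ∑ k, negMulLog (d k) := by
  have hprod : ∏ k, (X - C (d k : ℂ)) =
      ((Finset.univ.val.map fun k => (d k : ℂ)).map fun z => X - C z).prod := by
    rw [Multiset.map_map]; rfl
  have hroots := hA.roots_charpoly_eq_eigenvalues
  rw [h, hprod, roots_multiset_prod_X_sub_C] at hroots
  have hsum := congrArg (fun s => (s.map fun z : ℂ => negMulLog z.re).sum) hroots
  simpa [Multiset.map_map, Function.comp_def, ← Finset.sum_eq_multiset_sum,
    vnEntropy_eq_sum_negMulLog_eigenvalues hA] using hsum.symm

theorem vnEntropy_conjTranspose_mul_mul {A U : Matrix ι ι ℂ} (hA : A.IsHermitian)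
    (hU : U * Uᴴ = 1) : vnEntropy (Uᴴ * A * U) = vnEntropy A := by
  rw [vnEntropy_eq_sum_negMulLog_eigenvalues hA,
    vnEntropy_eq_sum_negMulLog_of_charpoly_eq (isHermitian_conjTranspose_mul_mul U hA)
      hA.eigenvalues (by rw [charpoly_mul_mul_eq_of_mul_eq_one hU, hA.charpoly_eq]; rfl)]

theorem _root_.Matrix.IsHermitian.kronecker {m n : Type*} {X : Matrix m m ℂ} {Y : Matrix n n ℂ}
    (hX : X.IsHermitian) (hY : Y.IsHermitian) : (X ⊗ₖ Y).IsHermitian := by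
  rw [IsHermitian, conjTranspose_kronecker, hX.eq, hY.eq]

theorem charpoly_kronecker {κ : Type*} [Fintype κ] [DecidableEq κ] {X : Matrix ι ι ℂ}
    {Y : Matrix κ κ ℂ} (hX : X.IsHermitian) (hY : Y.IsHermitian) :
    (X ⊗ₖ Y).charpoly =
      ∏ q : ι × κ, (Polynomial.X - C ((hX.eigenvalues q.1 * hY.eigenvalues q.2 : ℝ) : ℂ)) := by
  set V := hX.eigenvectorUnitary
  set W := hY.eigenvectorUnitary
  have hVW : (star (V : Matrix ι ι ℂ) ⊗ₖ star (W : Matrix κ κ ℂ)) *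
      ((V : Matrix ι ι ℂ) ⊗ₖ W) = 1 := by
    rw [← mul_kronecker_mul, Unitary.coe_star_mul_self, Unitary.coe_star_mul_self,
      one_kronecker_one]
  conv_lhs => rw [hX.spectral_theorem, hY.spectral_theorem]
  rw [conjStarAlgAut_apply, conjStarAlgAut_apply, mul_kronecker_mul, mul_kronecker_mul,
    charpoly_mul_mul_eq_of_mul_eq_one hVW, diagonal_kronecker_diagonal, charpoly_diagonal]
  simp

theorem vnEntropy_kronecker {κ : Type*} [Fintype κ] [DecidableEq κ] {X : Matrix ι ι ℂ}
    {Y : Matrix κ κ ℂ} (hX : X.IsHermitian) (hY : Y.IsHermitian) :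
    vnEntropy (X ⊗ₖ Y) = Y.trace.re * vnEntropy X + X.trace.re * vnEntropy Y := by
  rw [vnEntropy_eq_sum_negMulLog_of_charpoly_eq (hX.kronecker hY) _ (charpoly_kronecker hX hY),
    vnEntropy_eq_sum_negMulLog_eigenvalues hX, vnEntropy_eq_sum_negMulLog_eigenvalues hY,
    hX.trace_eq_sum_eigenvalues, hY.trace_eq_sum_eigenvalues, Fintype.sum_prod_type]
  simp only [negMulLog_mul, Finset.sum_add_distrib, ← Finset.mul_sum, ← Finset.sum_mul]
  simp [Finset.mul_sum]

theorem vnEntropy_conjTranspose_mul_kronecker_mul {κ : Type*} [Fintype κ] [DecidableEq κ]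
    {U : Matrix (ι × κ) (ι × κ) ℂ} (hU : U * Uᴴ = 1) {X : Matrix ι ι ℂ} {Y : Matrix κ κ ℂ}
    (hX : X.IsHermitian) (hY : Y.IsHermitian) (hXt : X.trace = 1) (hYt : Y.trace = 1) :
    vnEntropy (Uᴴ * (X ⊗ₖ Y) * U) = vnEntropy X + vnEntropy Y := by
  rw [vnEntropy_conjTranspose_mul_mul (hX.kronecker hY) hU, vnEntropy_kronecker hX hY, hXt, hYt]
  simp

theorem isHermitian_outer {m : Type*} (v : m → ℂ) : (outer v).IsHermitian := by
  simp [outer, IsHermitian, conjTranspose_vecMulVec]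

theorem OrthonormalFam.trace_outer {m : Type*} [Fintype m] {r : ℕ} {v : Fin r → m → ℂ}
    (hv : OrthonormalFam v) (i : Fin r) : (outer (v i)).trace = 1 := by
  simpa [outer, trace, vecMulVec_apply, mul_comm] using hv i i

theorem isHermitian_ptraceB {dA dB : ℕ}
    {M : Matrix (Fin dA × Fin dB) (Fin dA × Fin dB) ℂ} (hM : M.IsHermitian) :
    (ptraceB M).IsHermitian :=
  IsHermitian.ext fun i j => by simp only [ptraceB, of_apply, star_sum, hM.apply]

theorem trace_ptraceB {dA dB : ℕ} (M : Matrix (Fin dA × Fin dB) (Fin dA × Fin dB) ℂ) :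
    (ptraceB M).trace = M.trace := by
  rw [trace, trace, Fintype.sum_prod_type]
  rfl

theorem trace_mul_mul_conjTranspose {U : Matrix ι ι ℂ} (hU : Uᴴ * U = 1) (M : Matrix ι ι ℂ) :
    (U * M * Uᴴ).trace = M.trace := by
  rw [trace_mul_cycle, hU, Matrix.one_mul]

theorem qae_entropic_disturbance_formula_general
    {dA dB r : ℕ}
    (U : Matrix (Fin dA × Fin dB) (Fin dA × Fin dB) ℂ)
    (hU : U * U.conjTranspose = 1 ∧ U.conjTranspose * U = 1)
    (ρB : Matrix (Fin dB) (Fin dB) ℂ) (hρB : IsDensityMatrix ρB)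
    (p : Fin r → ℝ) (hp1 : ∑ i, p i = 1)
    (v : Fin r → (Fin dA × Fin dB) → ℂ) (hv : OrthonormalFam v)
    (ρin : Matrix (Fin dA × Fin dB) (Fin dA × Fin dB) ℂ)
    (hρin : ρin = ∑ i, (p i : ℂ) • outer (v i))
    (ρA : Matrix (Fin dA) (Fin dA) ℂ) (hρA : ρA = ptraceB (U * ρin * U.conjTranspose))
    (ρAi : Fin r → Matrix (Fin dA) (Fin dA) ℂ)
    (hρAi : ∀ i, ρAi i = ptraceB (U * outer (v i) * U.conjTranspose))
    (ρout : Matrix (Fin dA × Fin dB) (Fin dA × Fin dB) ℂ)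
    (hρout : ρout = U.conjTranspose * (ρA ⊗ₖ ρB) * U)
    (Φi : Fin r → Matrix (Fin dA × Fin dB) (Fin dA × Fin dB) ℂ)
    (hΦi : ∀ i, Φi i = U.conjTranspose * ((ρAi i) ⊗ₖ ρB) * U)
    (Δχ : ℝ)
    (hΔχ : Δχ = vnEntropy ρin - (vnEntropy ρout - ∑ i, p i * vnEntropy (Φi i))) :
    Δχ = vnEntropy ρin - vnEntropy ρA + ∑ i, p i * vnEntropy (ρAi i) := by
  obtain ⟨hUUh, hUhU⟩ := hU
  have hreduced {M} (hM : M.IsHermitian) (htr : M.trace = 1) :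
      (ptraceB (U * M * Uᴴ)).IsHermitian ∧ (ptraceB (U * M * Uᴴ)).trace = 1 :=
    ⟨isHermitian_ptraceB (isHermitian_mul_mul_conjTranspose U hM),
      by rw [trace_ptraceB, trace_mul_mul_conjTranspose hUhU, htr]⟩
  have hin_herm : ρin.IsHermitian := hρin ▸ isSelfAdjoint_sum _ fun i _ =>
    (isHermitian_outer (v i)).smul (Complex.conj_ofReal (p i))
  have hin_trace : ρin.trace = 1 := by
    simp [hρin, trace_sum, hv.trace_outer, ← Complex.ofReal_sum, hp1]
  obtain ⟨hA_herm, hA_trace⟩ := hρA ▸ hreduced hin_herm hin_trace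
  have hout : vnEntropy ρout = vnEntropy ρA + vnEntropy ρB := hρout ▸
    vnEntropy_conjTranspose_mul_kronecker_mul hUUh hA_herm hρB.1.1 hA_trace hρB.2
  have hΦ (i : Fin r) : vnEntropy (Φi i) = vnEntropy (ρAi i) + vnEntropy ρB := by
    obtain ⟨hAi_herm, hAi_trace⟩ :=
      hρAi i ▸ hreduced (isHermitian_outer (v i)) (hv.trace_outer i)
    rw [hΦi]
    exact vnEntropy_conjTranspose_mul_kronecker_mul hUUh hAi_herm hρB.1.1 hAi_trace hρB.2
  simp only [hΔχ, hout, hΦ, mul_add, Finset.sum_add_distrib, ← Finset.sum_mul, hp1]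
  ring

/-- **Eq. (29), sign corrected** (Entropic disturbance of the quantum autoencoder).
`Δχ = S(ρin) - S(ρ_A) + ∑ i, pᵢ S(ρ_A⁽ⁱ⁾)`; in particular `Δχ` does not depend on the
fresh-qubit state `ρ_B`. -/
theorem qae_entropic_disturbance_formula
    {dA dB r : ℕ}
    (U : Matrix (Fin dA × Fin dB) (Fin dA × Fin dB) ℂ)
    (hU : U * U.conjTranspose = 1 ∧ U.conjTranspose * U = 1)
    (ρB : Matrix (Fin dB) (Fin dB) ℂ) (hρB : IsDensityMatrix ρB)
    (p : Fin r → ℝ) (hp : ∀ i, 0 < p i) (hp1 : ∑ i, p i = 1)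
    (v : Fin r → (Fin dA × Fin dB) → ℂ) (hv : OrthonormalFam v)
    (ρin : Matrix (Fin dA × Fin dB) (Fin dA × Fin dB) ℂ)
    (hρin : ρin = ∑ i, (p i : ℂ) • outer (v i))
    (ρA : Matrix (Fin dA) (Fin dA) ℂ) (hρA : ρA = ptraceB (U * ρin * U.conjTranspose))
    (ρAi : Fin r → Matrix (Fin dA) (Fin dA) ℂ)
    (hρAi : ∀ i, ρAi i = ptraceB (U * outer (v i) * U.conjTranspose))
    (ρout : Matrix (Fin dA × Fin dB) (Fin dA × Fin dB) ℂ)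
    (hρout : ρout = U.conjTranspose * (ρA ⊗ₖ ρB) * U)
    (Φi : Fin r → Matrix (Fin dA × Fin dB) (Fin dA × Fin dB) ℂ)
    (hΦi : ∀ i, Φi i = U.conjTranspose * ((ρAi i) ⊗ₖ ρB) * U)
    (Δχ : ℝ)
    (hΔχ : Δχ = vnEntropy ρin - (vnEntropy ρout - ∑ i, p i * vnEntropy (Φi i))) :
    Δχ = vnEntropy ρin - vnEntropy ρA + ∑ i, p i * vnEntropy (ρAi i) :=
  qae_entropic_disturbance_formula_general U hU ρB hρB p hp1 v hv ρin hρin ρA hρA ρAi hρAi ρout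
    hρout Φi hΦi Δχ hΔχ

end QCE
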